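/- For every integer n ≥ 2, the second moment of the Chatterjee permutation statistic under the uniform distribution on the symmetric group satisfies E[ξ_n(π)²] = (n−2)(4n−7)/(10(n−1)²(n+1)), i.e. (1/n!) Σ_{π ∈ S_n} ξ_n(π)² = (n−2)(4n−7)/(10(n−1)²(n+1)). -/

import Mathlib

/-!
Write `D(π) = ∑ᵢ |π(i+1) − π(i)|`, so that `ξ = 1 − 3D/(n² − 1)` and only the first two moments
of `D` are needed. For distinct positions `a₁, …, a_k`, the tuple `(π a₁, …, π a_k)` is uniform
over injective tuples, because permutations act transitively on these. Expanding `D²`, the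
product of two jumps involves two, three or four distinct positions according as the jumps
coincide, are adjacent or are disjoint. By inclusion–exclusion, the sums of `|x − y|²`,
`|x − y| |y − z|` and `|x − y| |z − w|` over injective tuples reduce to power sums and to the
row sums `∑_y |x − y| = x² − (n − 1)x + n(n − 1)/2`.
-/

open Finset

noncomputable section

namespace ChatterjeePerm

lemma aux_succ_lt {n : ℕ} (i : Fin (n - 1)) : i.1 + 1 < n := by
  have := i.isLt; omega

lemma aux_lt {n : ℕ} (i : Fin (n - 1)) : i.1 < n := by
  have := i.isLt; omega

/-- The sum `Σ_{i=1}^{n-1} |π(i+1) − π(i)|` of absolute consecutive differences of a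
permutation `π` of `{1, …, n}` (represented on `Fin n`). -/
def permDiffSum (n : ℕ) (π : Equiv.Perm (Fin n)) : ℝ :=
  ∑ i : Fin (n - 1),
    |((π ⟨i.1 + 1, aux_succ_lt i⟩).1 : ℝ) - ((π ⟨i.1, aux_lt i⟩).1 : ℝ)|

/-- The Chatterjee permutation statistic `ξ_n(π) = 1 − 3 Σ |π(i+1) − π(i)| / (n² − 1)`. -/
def permXi (n : ℕ) (π : Equiv.Perm (Fin n)) : ℝ :=
  1 - 3 * permDiffSum n π / ((n : ℝ) ^ 2 - 1)

open Function Equiv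
open scoped Nat

section PermutationSums

variable {ι α M : Type*} [Fintype α] [DecidableEq α] [AddCommMonoid M]

theorem sum_perm_comp_eq_of_injective [Finite ι] {f f' : ι → α} (hf : Injective f)
    (hf' : Injective f') (F : (ι → α) → M) :
    ∑ π : Perm α, F (π ∘ f) = ∑ π : Perm α, F (π ∘ f') := by
  obtain ⟨σ, hσ⟩ := Perm.exists_extending_pair f' f hf' hf
  refine Fintype.sum_equiv (Equiv.mulRight σ) _ _ fun π => ?_
  congr 1
  ext i
  simp [hσ]

variable [Fintype ι] [DecidableEq ι]

theorem card_filter_injective :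
    #{g : ι → α | Injective g} = (Fintype.card α).descFactorial (Fintype.card ι) := by
  rw [← Fintype.card_embedding_eq,
    ← Fintype.card_congr (Equiv.subtypeInjectiveEquivEmbedding ι α), Fintype.card_subtype]

/-- Every injective `g` gives the same sum `∑ π, F (π ∘ g)`; summing it over all injective `g`
and reindexing `g ↦ π ∘ g` for each `π` computes it. -/
theorem descFactorial_nsmul_sum_perm_comp {f : ι → α} (hf : Injective f)
    (F : (ι → α) → M) :
    (Fintype.card α).descFactorial (Fintype.card ι) • ∑ π : Perm α, F (π ∘ f)
      = (Fintype.card α)! • ∑ g : ι → α with Injective g, F g := by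
  calc _ = ∑ g : ι → α with Injective g, ∑ π : Perm α, F (π ∘ g) := by
          rw [← card_filter_injective, ← sum_const]
          exact sum_congr rfl fun g hg => sum_perm_comp_eq_of_injective hf (mem_filter.1 hg).2 F
    _ = ∑ π : Perm α, ∑ g : ι → α with Injective g, F (π ∘ g) := sum_comm
    _ = ∑ π : Perm α, ∑ g : ι → α with Injective g, F g := by
          refine sum_congr rfl fun π _ => ?_
          refine sum_equiv (Equiv.arrowCongr (Equiv.refl ι) π) (fun g => ?_) fun _ _ => rfl
          simp only [mem_filter, mem_univ, true_and]
          exact (EquivLike.comp_injective g π).symm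
    _ = _ := by rw [sum_const, Finset.card_univ, Fintype.card_perm]

end PermutationSums

section Vectors

variable {α : Type*}

theorem sum_fin_succ_pi {M : Type*} [Fintype α] [AddCommMonoid M] {k : ℕ}
    (F : (Fin (k + 1) → α) → M) :
    ∑ g, F g = ∑ x, ∑ g : Fin k → α, F (Matrix.vecCons x g) := by
  rw [← (Fin.consEquiv fun _ => α).sum_comp, Fintype.sum_prod_type]
  rfl

theorem injective_vecCons_iff {k : ℕ} {x : α} {g : Fin k → α} :
    Injective (Matrix.vecCons x g) ↔ x ∉ Set.range g ∧ Injective g :=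
  Fin.cons_injective_iff

theorem injective_vec₂_iff {x y : α} : Injective ![x, y] ↔ x ≠ y := by
  simp [injective_vecCons_iff, injective_of_subsingleton]

theorem injective_vec₃_iff {x y z : α} :
    Injective ![x, y, z] ↔ x ≠ y ∧ x ≠ z ∧ y ≠ z := by
  simp [injective_vecCons_iff, Matrix.range_cons, injective_of_subsingleton]
  tauto

theorem injective_vec₄_iff {x y z w : α} :
    Injective ![x, y, z, w] ↔
      x ≠ y ∧ x ≠ z ∧ x ≠ w ∧ y ≠ z ∧ y ≠ w ∧ z ≠ w := by
  simp [injective_vecCons_iff, Matrix.range_cons, injective_of_subsingleton]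
  tauto

variable [Fintype α] [DecidableEq α] {M : Type*} [AddCommMonoid M]

theorem descFactorial_nsmul_sum_perm_apply₂ {a b : α} (h : Injective ![a, b])
    (F : α → α → M) :
    (Fintype.card α).descFactorial 2 • ∑ π : Perm α, F (π a) (π b)
      = (Fintype.card α)! • ∑ x, ∑ y, if Injective ![x, y] then F x y else 0 := by
  simpa [sum_filter, sum_fin_succ_pi, Matrix.empty_eq] using
    descFactorial_nsmul_sum_perm_comp h fun g => F (g 0) (g 1)

theorem descFactorial_nsmul_sum_perm_apply₃ {a b c : α} (h : Injective ![a, b, c])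
    (F : α → α → α → M) :
    (Fintype.card α).descFactorial 3 • ∑ π : Perm α, F (π a) (π b) (π c)
      = (Fintype.card α)! •
        ∑ x, ∑ y, ∑ z, if Injective ![x, y, z] then F x y z else 0 := by
  simpa [sum_filter, sum_fin_succ_pi, Matrix.empty_eq] using
    descFactorial_nsmul_sum_perm_comp h fun g => F (g 0) (g 1) (g 2)

theorem descFactorial_nsmul_sum_perm_apply₄ {a b c d : α} (h : Injective ![a, b, c, d])
    (F : α → α → α → α → M) :
    (Fintype.card α).descFactorial 4 • ∑ π : Perm α, F (π a) (π b) (π c) (π d)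
      = (Fintype.card α)! •
        ∑ x, ∑ y, ∑ z, ∑ w, if Injective ![x, y, z, w] then F x y z w else 0 := by
  simpa [sum_filter, sum_fin_succ_pi, Matrix.empty_eq] using
    descFactorial_nsmul_sum_perm_comp h fun g => F (g 0) (g 1) (g 2) (g 3)

end Vectors

section InclusionExclusion

variable {α M : Type*} [DecidableEq α] [AddCommGroup M]

theorem ite_injective_vec₂ (F : α → α → M) (hF : ∀ x, F x x = 0) (x y : α) :
    (if Injective ![x, y] then F x y else 0) = F x y := by
  by_cases hxy : x = y <;> simp_all

theorem ite_injective_vec₃ (G : α → α → α → M) (h₁ : ∀ x z, G x x z = 0)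
    (h₂ : ∀ x y, G x y y = 0) (x y z : α) :
    (if Injective ![x, y, z] then G x y z else 0) = G x y z - if z = x then G x y z else 0 := by
  by_cases hxy : x = y <;> by_cases hyz : y = z <;> by_cases hzx : z = x <;>
    simp_all [injective_vec₃_iff, eq_comm]

theorem ite_injective_vec₄ (G : α → α → α → α → M) (h₁ : ∀ x z w, G x x z w = 0)
    (h₂ : ∀ x y z, G x y z z = 0) (x y z w : α) :
    (if Injective ![x, y, z, w] then G x y z w else 0)
      = G x y z w
        - ((if z = x then G x y z w else 0) + (if w = x then G x y z w else 0)
          + (if z = y then G x y z w else 0) + (if w = y then G x y z w else 0))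
        + ((if z = x ∧ w = y then G x y z w else 0)
          + (if z = y ∧ w = x then G x y z w else 0)) := by
  by_cases hxy : x = y <;> by_cases hzw : z = w <;> by_cases h₁ : z = x <;>
    by_cases h₂ : w = x <;> by_cases h₃ : z = y <;> by_cases h₄ : w = y <;>
    simp_all [injective_vec₄_iff, eq_comm]

end InclusionExclusion

section SymmetricKernel

variable {α : Type*} [Fintype α] [DecidableEq α] {u : α → α → ℝ}
  (hsymm : ∀ x y, u x y = u y x) (hdiag : ∀ x, u x x = 0)
include hsymm hdiag

theorem sum_injective₃_mul_path :
    ∑ x, ∑ y, ∑ z, (if Injective ![x, y, z] then u x y * u y z else 0)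
      = ∑ x, (∑ y, u x y) ^ 2 - ∑ x, ∑ y, u x y ^ 2 := by
  simp only [ite_injective_vec₃ (fun x y z => u x y * u y z) (by simp [hdiag]) (by simp [hdiag]),
    sum_sub_distrib, Fintype.sum_ite_eq']
  rw [sum_comm]
  simp [sq, ← sum_mul, ← mul_sum, hsymm]

theorem sum_injective₄_mul_disjoint :
    ∑ x, ∑ y, ∑ z, ∑ w, (if Injective ![x, y, z, w] then u x y * u z w else 0)
      = (∑ x, ∑ y, u x y) ^ 2 - 4 * ∑ x, (∑ y, u x y) ^ 2
        + 2 * ∑ x, ∑ y, u x y ^ 2 := by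
  simp only [ite_injective_vec₄ (fun x y z w => u x y * u z w) (by simp [hdiag])
      (by simp [hdiag]),
    sum_add_distrib, sum_sub_distrib, Fintype.sum_ite_eq', ite_and, sum_ite_irrel, sum_const_zero]
  have total : ∑ x, ∑ y, ∑ z, ∑ w, u x y * u z w = (∑ x, ∑ y, u x y) ^ 2 := by
    simp only [sq, sum_mul, ← mul_sum]
  have row : ∑ x, ∑ y, ∑ z, u x y * u x z = ∑ x, (∑ y, u x y) ^ 2 := by
    simp only [sq, sum_mul_sum]
  have row₁ : ∑ x, ∑ y, ∑ z, u x y * u z x = ∑ x, (∑ y, u x y) ^ 2 := by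
    rw [← row]; congr! 4 with x - y - z; exact hsymm z x
  have row₂ : ∑ x, ∑ y, ∑ z, u x y * u y z = ∑ x, (∑ y, u x y) ^ 2 := by
    rw [← row, sum_comm]; congr! 4 with y - x - z; exact hsymm x y
  have row₃ : ∑ x, ∑ y, ∑ z, u x y * u z y = ∑ x, (∑ y, u x y) ^ 2 := by
    rw [← row, sum_comm]; congr! 4 <;> exact hsymm _ _
  have swap : ∑ x, ∑ y, u x y * u y x = ∑ x, ∑ y, u x y ^ 2 := by
    simp only [sq, hsymm]
  rw [total, row, row₁, row₂, row₃, swap]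
  simp only [sq]
  ring

end SymmetricKernel

theorem cast_descFactorial_eq_prod (n k : ℕ) :
    (n.descFactorial k : ℝ) = ∏ i ∈ range k, ((n : ℝ) - i) := by
  induction k with
  | zero => simp
  | succ k ih =>
    rw [Nat.descFactorial_succ, prod_range_succ, ← ih]
    rcases le_or_gt k n with h | h
    · push_cast [Nat.cast_sub h]
      ring
    · simp [Nat.descFactorial_of_lt h]

theorem eq_factorial_mul_of_descFactorial_nsmul {N k : ℕ} (hk : k ≤ N) {S V W : ℝ}
    (h : N.descFactorial k • S = N ! • V) (hV : V = (∏ i ∈ range k, ((N : ℝ) - i)) * W) :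
    S = N ! * W := by
  have hd : (N.descFactorial k : ℝ) ≠ 0 :=
    Nat.cast_ne_zero.2 (Nat.descFactorial_eq_zero_iff_lt.not.2 (not_lt.2 hk))
  rw [nsmul_eq_mul, nsmul_eq_mul, hV, ← cast_descFactorial_eq_prod] at h
  exact mul_left_cancel₀ hd (h.trans (by ring))

theorem sum_range_quartic (n : ℕ) (c₀ c₁ c₂ c₃ c₄ : ℝ) :
    ∑ i ∈ range n, (c₀ + c₁ * i + c₂ * i ^ 2 + c₃ * i ^ 3 + c₄ * i ^ 4)
      = c₀ * n + c₁ * (n * (n - 1) / 2) + c₂ * (n * (n - 1) * (2 * n - 1) / 6)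
        + c₃ * (n ^ 2 * (n - 1) ^ 2 / 4)
        + c₄ * (n * (n - 1) * (2 * n - 1) * (3 * n ^ 2 - 3 * n - 1) / 30) := by
  induction n with
  | zero => simp
  | succ m ih =>
    rw [sum_range_succ, ih]
    push_cast
    ring

theorem sum_range_abs_sub {x m : ℕ} (hx : x ≤ m) :
    ∑ y ∈ range m, |(x : ℝ) - y| = (x : ℝ) ^ 2 - (m - 1) * x + m * (m - 1) / 2 := by
  obtain ⟨k, rfl⟩ := Nat.exists_eq_add_of_le hx
  have below : ∀ y ∈ range x,
      |(x : ℝ) - y| = x + (-1) * y + 0 * y ^ 2 + 0 * y ^ 3 + 0 * y ^ 4 := by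
    intro y hy
    have : (y : ℝ) ≤ x := by exact_mod_cast (mem_range.1 hy).le
    rw [abs_of_nonneg (by linarith)]
    ring
  have above : ∀ y ∈ range k,
      |(x : ℝ) - ((x + y : ℕ) : ℝ)| = 0 + 1 * y + 0 * y ^ 2 + 0 * y ^ 3 + 0 * y ^ 4 := by
    intro y _
    rw [Nat.cast_add, abs_sub_comm, add_sub_cancel_left, abs_of_nonneg (by positivity)]
    ring
  rw [sum_range_add, sum_congr rfl below, sum_congr rfl above, sum_range_quartic,
    sum_range_quartic]
  push_cast
  ring

def finDist {n : ℕ} (x y : Fin n) : ℝ := |((x : ℕ) : ℝ) - (y : ℕ)|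

section FinDist

variable {n : ℕ}

theorem finDist_self (x : Fin n) : finDist x x = 0 := by simp [finDist]

theorem finDist_comm (x y : Fin n) : finDist x y = finDist y x := abs_sub_comm _ _

theorem sum_finDist_left (x : Fin n) :
    ∑ y, finDist x y = (x : ℝ) ^ 2 - (n - 1) * x + n * (n - 1) / 2 :=
  (Fin.sum_univ_eq_sum_range (fun y => |((x : ℕ) : ℝ) - y|) n).trans
    (sum_range_abs_sub x.isLt.le)

theorem sum_sum_finDist : ∑ x : Fin n, ∑ y, finDist x y = n * (n ^ 2 - 1) / 3 := by
  simp only [sum_finDist_left]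
  rw [Fin.sum_univ_eq_sum_range (fun x => (x : ℝ) ^ 2 - (n - 1) * x + n * (n - 1) / 2) n,
    sum_congr rfl fun (x : ℕ) _ => show (x : ℝ) ^ 2 - (n - 1) * x + n * (n - 1) / 2
      = n * (n - 1) / 2 + (-(n - 1)) * x + 1 * x ^ 2 + 0 * x ^ 3 + 0 * x ^ 4 by ring,
    sum_range_quartic]
  ring

theorem sum_sq_sum_finDist :
    ∑ x : Fin n, (∑ y, finDist x y) ^ 2 = n * (n ^ 2 - 1) * (7 * n ^ 2 - 8) / 60 := by
  simp only [sum_finDist_left]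
  rw [Fin.sum_univ_eq_sum_range (fun x => ((x : ℝ) ^ 2 - (n - 1) * x + n * (n - 1) / 2) ^ 2) n,
    sum_congr rfl fun (x : ℕ) _ => show ((x : ℝ) ^ 2 - (n - 1) * x + n * (n - 1) / 2) ^ 2
      = (n * (n - 1) / 2) ^ 2 + (-(n - 1) * (n * (n - 1))) * x
        + ((n - 1) ^ 2 + n * (n - 1)) * x ^ 2 + (-2 * (n - 1)) * x ^ 3 + 1 * x ^ 4 by ring,
    sum_range_quartic]
  ring

theorem sum_sum_finDist_sq : ∑ x : Fin n, ∑ y, finDist x y ^ 2 = n ^ 2 * (n ^ 2 - 1) / 6 := by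
  have row : ∀ x : ℕ, ∑ y : Fin n, ((x : ℝ) - (y : ℕ)) ^ 2
      = n * (n - 1) * (2 * n - 1) / 6 + (-(n * (n - 1))) * x + n * x ^ 2
        + 0 * x ^ 3 + 0 * x ^ 4 := by
    intro x
    rw [Fin.sum_univ_eq_sum_range (fun y => ((x : ℝ) - y) ^ 2) n,
      sum_congr rfl fun (y : ℕ) _ => show ((x : ℝ) - y) ^ 2
        = x ^ 2 + (-2 * x) * y + 1 * y ^ 2 + 0 * y ^ 3 + 0 * y ^ 4 by ring,
      sum_range_quartic]
    ring
  simp only [finDist, sq_abs]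
  rw [Fin.sum_univ_eq_sum_range (fun x => ∑ y : Fin n, ((x : ℝ) - (y : ℕ)) ^ 2) n,
    sum_congr rfl fun x _ => row x, sum_range_quartic]
  ring

theorem sum_perm_finDist {a b : Fin n} (h : Injective ![a, b]) :
    ∑ π : Perm (Fin n), finDist (π a) (π b) = n ! * ((n + 1) / 3) := by
  have key := descFactorial_nsmul_sum_perm_apply₂ h finDist
  simp only [ite_injective_vec₂ _ finDist_self, sum_sum_finDist, Fintype.card_fin] at key
  refine eq_factorial_mul_of_descFactorial_nsmul (by simpa using Fintype.card_le_of_injective _ h)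
    key ?_
  simp [prod_range_succ]
  ring

theorem sum_perm_finDist_sq {a b : Fin n} (h : Injective ![a, b]) :
    ∑ π : Perm (Fin n), finDist (π a) (π b) ^ 2 = n ! * (n * (n + 1) / 6) := by
  have key := descFactorial_nsmul_sum_perm_apply₂ h fun x y => finDist x y ^ 2
  simp only [ite_injective_vec₂ (fun x y => finDist x y ^ 2) (by simp [finDist_self]),
    sum_sum_finDist_sq, Fintype.card_fin] at key
  refine eq_factorial_mul_of_descFactorial_nsmul (by simpa using Fintype.card_le_of_injective _ h)
    key ?_
  simp [prod_range_succ]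
  ring

theorem sum_perm_finDist_mul_path {a b c : Fin n} (h : Injective ![a, b, c]) :
    ∑ π : Perm (Fin n), finDist (π a) (π b) * finDist (π b) (π c)
      = n ! * ((n + 1) * (7 * n + 4) / 60) := by
  have key := descFactorial_nsmul_sum_perm_apply₃ h fun x y z => finDist x y * finDist y z
  simp only [sum_injective₃_mul_path finDist_comm finDist_self, sum_sq_sum_finDist,
    sum_sum_finDist_sq, Fintype.card_fin] at key
  refine eq_factorial_mul_of_descFactorial_nsmul (by simpa using Fintype.card_le_of_injective _ h)
    key ?_
  simp [prod_range_succ]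
  ring

theorem sum_perm_finDist_mul_disjoint {a b c d : Fin n} (h : Injective ![a, b, c, d]) :
    ∑ π : Perm (Fin n), finDist (π a) (π b) * finDist (π c) (π d)
      = n ! * ((n + 1) * (5 * n + 4) / 45) := by
  have key := descFactorial_nsmul_sum_perm_apply₄ h fun x y z w => finDist x y * finDist z w
  simp only [sum_injective₄_mul_disjoint finDist_comm finDist_self, sum_sum_finDist,
    sum_sq_sum_finDist, sum_sum_finDist_sq, Fintype.card_fin] at key
  refine eq_factorial_mul_of_descFactorial_nsmul (by simpa using Fintype.card_le_of_injective _ h)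
    key ?_
  simp [prod_range_succ]
  ring

end FinDist

def jump {n : ℕ} (π : Perm (Fin n)) (i : Fin (n - 1)) : ℝ :=
  finDist (π ⟨i + 1, aux_succ_lt i⟩) (π ⟨i, aux_lt i⟩)

section Jumps

variable {n : ℕ}

theorem permDiffSum_eq_sum_jump (π : Perm (Fin n)) : permDiffSum n π = ∑ i, jump π i := rfl

theorem sum_perm_jump (i : Fin (n - 1)) : ∑ π : Perm (Fin n), jump π i = n ! * ((n + 1) / 3) :=
  sum_perm_finDist (a := ⟨i + 1, aux_succ_lt i⟩) (b := ⟨i, aux_lt i⟩)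
    (injective_vec₂_iff.2 (by simp [Fin.ext_iff]))

theorem sum_perm_jump_mul_jump_of_adjacent {i j : Fin (n - 1)} (hij : (j : ℕ) = i + 1) :
    ∑ π : Perm (Fin n), jump π i * jump π j = n ! * ((n + 1) * (7 * n + 4) / 60) := by
  have hj : (⟨j, aux_lt j⟩ : Fin n) = ⟨i + 1, aux_succ_lt i⟩ := Fin.ext hij
  refine (sum_congr rfl fun π _ => ?_).trans (sum_perm_finDist_mul_path
    (a := ⟨i, aux_lt i⟩) (b := ⟨i + 1, aux_succ_lt i⟩) (c := ⟨j + 1, aux_succ_lt j⟩)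
    (injective_vec₃_iff.2 (by simp [Fin.ext_iff]; omega)))
  rw [jump, jump, hj, finDist_comm (π ⟨i + 1, _⟩), finDist_comm (π ⟨j + 1, _⟩)]

theorem sum_perm_jump_mul_jump (i j : Fin (n - 1)) :
    ∑ π : Perm (Fin n), jump π i * jump π j
      = n ! * (if i = j then (n * (n + 1) / 6 : ℝ)
          else if (j : ℕ) = i + 1 ∨ (i : ℕ) = j + 1 then ((n + 1) * (7 * n + 4) / 60 : ℝ)
          else ((n + 1) * (5 * n + 4) / 45 : ℝ)) := by
  rcases eq_or_ne i j with rfl | hne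
  · simp only [if_pos, ← sq]
    exact sum_perm_finDist_sq (a := ⟨i + 1, aux_succ_lt i⟩) (b := ⟨i, aux_lt i⟩)
      (injective_vec₂_iff.2 (by simp [Fin.ext_iff]))
  rw [if_neg hne]
  by_cases h₁ : (j : ℕ) = i + 1
  · rw [if_pos (Or.inl h₁), sum_perm_jump_mul_jump_of_adjacent h₁]
  by_cases h₂ : (i : ℕ) = j + 1
  · simp only [if_pos (Or.inr h₂), mul_comm (jump _ i)]
    exact sum_perm_jump_mul_jump_of_adjacent h₂
  rw [if_neg (by tauto)]
  exact sum_perm_finDist_mul_disjoint (a := ⟨i + 1, aux_succ_lt i⟩) (b := ⟨i, aux_lt i⟩)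
    (c := ⟨j + 1, aux_succ_lt j⟩) (d := ⟨j, aux_lt j⟩)
    (injective_vec₄_iff.2 (by simp [Fin.ext_iff]; omega))

end Jumps

theorem sum_sum_ite_val_eq_succ (m : ℕ) :
    ∑ i : Fin (m + 1), ∑ j : Fin (m + 1), (if (j : ℕ) = i + 1 then 1 else 0 : ℝ) = m := by
  have succ_iff : ∀ (t : Fin m) (i : Fin (m + 1)), (t.succ : ℕ) = i + 1 ↔ i = t.castSucc := by
    simp [Fin.ext_iff, eq_comm]
  rw [sum_comm, Fin.sum_univ_succ]
  simp only [succ_iff]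
  simp

theorem sum_sum_ite_adjacent (m : ℕ) (c₀ c₁ c₂ : ℝ) :
    ∑ i : Fin (m + 1), ∑ j : Fin (m + 1),
      (if i = j then c₀ else if (j : ℕ) = i + 1 ∨ (i : ℕ) = j + 1 then c₁ else c₂)
      = (m + 1) * c₀ + 2 * m * c₁ + m * (m - 1) * c₂ := by
  have split : ∀ i j : Fin (m + 1),
      (if i = j then c₀ else if (j : ℕ) = i + 1 ∨ (i : ℕ) = j + 1 then c₁ else c₂)
        = c₂ + (c₀ - c₂) * (if i = j then 1 else 0)
          + (c₁ - c₂) *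
            ((if (j : ℕ) = i + 1 then 1 else 0) + (if (i : ℕ) = j + 1 then 1 else 0)) := by
    intro i j
    by_cases h₀ : i = j
    · subst h₀; simp
    rw [if_neg h₀, if_neg h₀]
    by_cases h₁ : (j : ℕ) = i + 1
    · rw [if_pos (Or.inl h₁), if_pos h₁, if_neg (by omega)]
      ring
    by_cases h₂ : (i : ℕ) = j + 1
    · rw [if_pos (Or.inr h₂), if_neg h₁, if_pos h₂]
      ring
    · rw [if_neg (by tauto), if_neg h₁, if_neg h₂]
      ring
  have diag : ∑ i : Fin (m + 1), ∑ j : Fin (m + 1), (if i = j then 1 else 0 : ℝ) = m + 1 := by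
    simp
  have pred :
      ∑ i : Fin (m + 1), ∑ j : Fin (m + 1), (if (i : ℕ) = j + 1 then 1 else 0 : ℝ) = m := by
    rw [sum_comm]; exact sum_sum_ite_val_eq_succ m
  simp only [split, sum_add_distrib, ← mul_sum, diag, sum_sum_ite_val_eq_succ, pred]
  simp
  ring

theorem sum_perm_permDiffSum {n : ℕ} (hn : 1 ≤ n) :
    ∑ π : Perm (Fin n), permDiffSum n π = n ! * ((n - 1) * (n + 1) / 3) := by
  simp only [permDiffSum_eq_sum_jump]
  rw [sum_comm]
  simp only [sum_perm_jump, sum_const, Finset.card_univ, Fintype.card_fin, nsmul_eq_mul]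
  push_cast [Nat.cast_sub hn]
  ring

theorem sum_perm_permDiffSum_sq {n : ℕ} (hn : 2 ≤ n) :
    ∑ π : Perm (Fin n), permDiffSum n π ^ 2
      = n ! * ((n - 1) * (n * (n + 1) / 6) + 2 * (n - 2) * ((n + 1) * (7 * n + 4) / 60)
          + (n - 2) * (n - 3) * ((n + 1) * (5 * n + 4) / 45)) := by
  obtain ⟨m, rfl⟩ : ∃ m, n = m + 2 := ⟨n - 2, by omega⟩
  calc _ = ∑ i : Fin (m + 1), ∑ j : Fin (m + 1),
        ∑ π : Perm (Fin (m + 2)), jump π i * jump π j := by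
          simp only [permDiffSum_eq_sum_jump, sq, sum_mul_sum]
          rw [sum_comm]
          exact sum_congr rfl fun i _ => sum_comm
    _ = _ := by
          simp only [sum_perm_jump_mul_jump, ← mul_sum, sum_sum_ite_adjacent]
          push_cast
          ring

/-- Lemma 2.1: for every `n ≥ 2`, the second moment of the Chatterjee
permutation statistic under the uniform distribution on the symmetric group satisfies
`E[ξ_n(π)²] = (n−2)(4n−7)/(10(n−1)²(n+1))`. -/
theorem secondMoment_permXi (n : ℕ) (hn : 2 ≤ n) :
    (1 / (n.factorial : ℝ)) * ∑ π : Equiv.Perm (Fin n), (permXi n π) ^ 2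
      = ((n : ℝ) - 2) * (4 * (n : ℝ) - 7)
        / (10 * ((n : ℝ) - 1) ^ 2 * ((n : ℝ) + 1)) := by
  have hn' : (2 : ℝ) ≤ n := by exact_mod_cast hn
  have hne : (n : ℝ) ^ 2 - 1 ≠ 0 := by nlinarith
  have permXi_sq : ∀ π : Perm (Fin n), permXi n π ^ 2
      = 1 - 6 / ((n : ℝ) ^ 2 - 1) * permDiffSum n π
        + 9 / ((n : ℝ) ^ 2 - 1) ^ 2 * permDiffSum n π ^ 2 := by
    intro π
    unfold permXi
    field_simp
    ring
  simp only [permXi_sq, sum_add_distrib, sum_sub_distrib, ← mul_sum,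
    sum_perm_permDiffSum (by omega : 1 ≤ n), sum_perm_permDiffSum_sq hn, sum_const,
    Finset.card_univ, Fintype.card_perm, Fintype.card_fin, nsmul_eq_mul, mul_one]
  have hsub : (n : ℝ) - 1 ≠ 0 := by linarith
  have hadd : (n : ℝ) + 1 ≠ 0 := by linarith
  field_simp
  ring

end ChatterjeePerm
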